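/- arXiv:2305.08798 — 5 statements merged into one kernel-verified Lean document; each statement's English description precedes it below -/
import Mathlib

section
/- Let S be a finite set, s₀ ∈ S, and a,b,c,d ∈ S−{s₀} distinct. Then in the polynomial ring R_S one has the identity R^S_{abcd} = R^S_{s₀adc} − R^S_{s₀adb}. Consequently, the collection of all elements R^S_{abcd} (a,b,c,d ∈ S, a≠b, c≠d) is contained in the ℤ-linear span of the subcollection of those with first index equal to s₀. -/
open MvPolynomial Finset TensorProduct

noncomputable section

/-- `[ℓ] = {1, …, ℓ}`. -/
abbrev Iset (n : ℕ) : Finset ℕ := Finset.Icc 1 n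

/-! ### The "complex" rings `R_S = R[(D_{J,K})_{{J,K} ∈ P•(S)}]`.
An unordered pair `{J,K}` with `J ⊔ K = S` and `2 ≤ |J| ≤ |S|-2` is represented by
its unique member containing `min S`. -/

/-- Index type for the variables `D_{J,K}`, `{J,K} ∈ P•(S)`: the canonical member
of the pair is the one whose minimum is `min S`. -/
abbrev CxIdx (S : Finset ℕ) : Type :=
  {J : Finset ℕ // J ⊆ S ∧ 2 ≤ J.card ∧ 2 ≤ (S \ J).card ∧ J.min = S.min}

/-- The polynomial ring `R_S` on the variables `D_{J,K}`, `{J,K} ∈ P•(S)`. -/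
abbrev CxRing (R : Type) [CommRing R] (S : Finset ℕ) : Type := MvPolynomial (CxIdx S) R

def cxXv (R : Type) [CommRing R] (S J : Finset ℕ) : CxRing R S :=
  if h : J ⊆ S ∧ 2 ≤ J.card ∧ 2 ≤ (S \ J).card ∧ J.min = S.min then X ⟨J, h⟩ else 0

/-- The variable `D_{J,K}` of `R_S` (equal to `0` if `{J,K} ∉ P•(S)`). -/
def cxD (R : Type) [CommRing R] (S J K : Finset ℕ) : CxRing R S :=
  if Disjoint J K ∧ J ∪ K = S then (if J.min ≤ K.min then cxXv R S J else cxXv R S K)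
  else 0

/-- `{J,K} ⋂̸ {J',K'}`:  `J ⊄ J'`, `J ⊄ K'`, `J' ⊄ J` and `K' ⊄ J`. -/
abbrev NcapCx (J J' K' : Finset ℕ) : Prop :=
  ¬ J ⊆ J' ∧ ¬ J ⊆ K' ∧ ¬ J' ⊆ J ∧ ¬ K' ⊆ J

/-- The element `R^S_{abcd}`. -/
def cxRel (R : Type) [CommRing R] (S : Finset ℕ) (a b c d : ℕ) : CxRing R S :=
  (∑ J ∈ S.powerset,
    if 2 ≤ J.card ∧ 2 ≤ (S \ J).card ∧ a ∈ J ∧ b ∈ J ∧ c ∈ S \ J ∧ d ∈ S \ J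
    then cxD R S J (S \ J) else 0)
  - ∑ J ∈ S.powerset,
    if 2 ≤ J.card ∧ 2 ≤ (S \ J).card ∧ a ∈ J ∧ c ∈ J ∧ b ∈ S \ J ∧ d ∈ S \ J
    then cxD R S J (S \ J) else 0

/-- The ideal `I_S ⊂ R_S`. -/
def cxIdeal (R : Type) [CommRing R] (S : Finset ℕ) : Ideal (CxRing R S) :=
  Ideal.span (
    {x | ∃ J K J' K' : Finset ℕ,
      (Disjoint J K ∧ J ∪ K = S ∧ 2 ≤ J.card ∧ 2 ≤ K.card) ∧
      (Disjoint J' K' ∧ J' ∪ K' = S ∧ 2 ≤ J'.card ∧ 2 ≤ K'.card) ∧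
      NcapCx J J' K' ∧ x = cxD R S J K * cxD R S J' K'} ∪
    {x | ∃ a b c d : ℕ, a ∈ S ∧ b ∈ S ∧ c ∈ S ∧ d ∈ S ∧ a ≠ b ∧ c ≠ d ∧
      x = cxRel R S a b c d})

/-- The homomorphism `F : R_{[ℓ]} → R_{[ℓ+1]}`, `D_{J,K} ↦ D_{J∪{ℓ+1},K} + D_{J,K∪{ℓ+1}}`. -/
def Fcx (R : Type) [CommRing R] (ℓ : ℕ) : CxRing R (Iset ℓ) →ₐ[R] CxRing R (Iset (ℓ + 1)) :=
  aeval fun i =>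
    cxD R (Iset (ℓ + 1)) (i.1 ∪ {ℓ + 1}) (Iset ℓ \ i.1)
    + cxD R (Iset (ℓ + 1)) i.1 ((Iset ℓ \ i.1) ∪ {ℓ + 1})

/-- The homomorphism `F_P : R_{{nd}⊔B} → R_{[ℓ]}`, `D_{J',K'} ↦ D_{P∪(J'-{nd}),K'}` for
`nd ∈ J'`; here `nd = 0`. -/
def FJcx (R : Type) [CommRing R] (ℓ : ℕ) (P B : Finset ℕ) :
    CxRing R (insert 0 B) →ₐ[R] CxRing R (Iset ℓ) :=
  aeval fun i => cxD R (Iset ℓ) (P ∪ i.1.erase 0) (insert 0 B \ i.1)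

/-- The homomorphism `F_{J,K} : R_{{nd}⊔J} ⊗ R_{{nd}⊔K} → R_{[ℓ]}` acting by `F_K` on the
first factor and by `F_J` on the second. -/
def FJKcx (R : Type) [CommRing R] (ℓ : ℕ) (J K : Finset ℕ) :
    TensorProduct R (CxRing R (insert 0 J)) (CxRing R (insert 0 K)) →ₐ[R] CxRing R (Iset ℓ) :=
  Algebra.TensorProduct.productMap (FJcx R ℓ K J) (FJcx R ℓ J K)

/-- The submodule `A ⊗ I_B + I_A ⊗ B` of `A ⊗_R B`. -/
def mixedSub (R : Type) [CommRing R] {A B : Type} [CommRing A] [CommRing B]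
    [Algebra R A] [Algebra R B] (IA : Ideal A) (IB : Ideal B) :
    Submodule R (TensorProduct R A B) :=
  Submodule.span R
    ({x | ∃ p q, q ∈ IB ∧ x = p ⊗ₜ[R] q} ∪ {x | ∃ p q, p ∈ IA ∧ x = p ⊗ₜ[R] q})

/-! ### The "real" rings `R_{0,S}` with variables `ℝE_{J,K}`, `{J,K} ∈ P(S)`, and
`ℝD_{I;J,K}`, `(I,{J,K}) ∈ P̃•(S)`.  The unordered pair `{J,K}` is represented by
its member whose minimum equals the minimum of `J ∪ K`. -/

abbrev EIdx (S : Finset ℕ) : Type := {J : Finset ℕ // J ⊆ S ∧ J.min = S.min}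

abbrev DIdx (S : Finset ℕ) : Type :=
  {p : Finset ℕ × Finset ℕ //
    p.1 ⊆ S ∧ p.2 ⊆ S \ p.1 ∧ 1 ≤ p.1.card ∧ 2 ≤ (S \ p.1).card ∧ p.2.min = (S \ p.1).min}

/-- The polynomial ring `R_{0,S}`. -/
abbrev RRing (R : Type) [CommRing R] (S : Finset ℕ) : Type :=
  MvPolynomial (EIdx S ⊕ DIdx S) R

def reXe (R : Type) [CommRing R] (S J : Finset ℕ) : RRing R S :=
  if h : J ⊆ S ∧ J.min = S.min then X (Sum.inl ⟨J, h⟩) else 0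

/-- The variable `ℝE_{J,K}` of `R_{0,S}` (equal to `0` if `{J,K} ∉ P(S)`). -/
def reE (R : Type) [CommRing R] (S J K : Finset ℕ) : RRing R S :=
  if Disjoint J K ∧ J ∪ K = S then (if J.min ≤ K.min then reXe R S J else reXe R S K)
  else 0

def reXd (R : Type) [CommRing R] (S I J : Finset ℕ) : RRing R S :=
  if h : I ⊆ S ∧ J ⊆ S \ I ∧ 1 ≤ I.card ∧ 2 ≤ (S \ I).card ∧ J.min = (S \ I).min
  then X (Sum.inr ⟨(I, J), h⟩) else 0

/-- The variable `ℝD_{I;J,K}` of `R_{0,S}` (equal to `0` if `(I,{J,K}) ∉ P̃•(S)`). -/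
def reD (R : Type) [CommRing R] (S I J K : Finset ℕ) : RRing R S :=
  if Disjoint I (J ∪ K) ∧ Disjoint J K ∧ I ∪ (J ∪ K) = S then
    (if J.min ≤ K.min then reXd R S I J else reXd R S I K)
  else 0

/-- The sign `ε_{J,K}`: `1` if `min (J ∪ K) ∈ J` and `-1` otherwise. -/
def epsm (J K : Finset ℕ) : ℤ := if J.min ≤ K.min then 1 else -1

/-- `{J,K} ⪯ {J',K'}`. -/
abbrev preceq (J K J' K' : Finset ℕ) : Prop := (J ⊆ J' ∧ K ⊆ K') ∨ (J ⊆ K' ∧ K ⊆ J')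

/-- `{J,K} ∈ P(S)`. -/
abbrev validE (S J K : Finset ℕ) : Prop := Disjoint J K ∧ J ∪ K = S

/-- `(I,{J,K}) ∈ P̃•(S)`. -/
abbrev validD (S I J K : Finset ℕ) : Prop :=
  Disjoint I (J ∪ K) ∧ Disjoint J K ∧ I ∪ (J ∪ K) = S ∧ 1 ≤ I.card ∧ 2 ≤ (J ∪ K).card

/-- The element `E^S_{abc}`. -/
def relE (R : Type) [CommRing R] (S : Finset ℕ) (a b c : ℕ) : RRing R S :=
  (∑ I ∈ S.powerset, ∑ J ∈ (S \ I).powerset,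
    if 1 ≤ I.card ∧ 2 ≤ (S \ I).card ∧ a ∈ J ∧ b ∈ J ∧ c ∈ I
    then epsm J ((S \ I) \ J) • reD R S I J ((S \ I) \ J) else 0)
  - (∑ I ∈ S.powerset, ∑ J ∈ (S \ I).powerset,
    if 1 ≤ I.card ∧ 2 ≤ (S \ I).card ∧ a ∈ J ∧ c ∈ J ∧ b ∈ I
    then epsm J ((S \ I) \ J) • reD R S I J ((S \ I) \ J) else 0)
  - ∑ I ∈ S.powerset, ∑ J ∈ (S \ I).powerset,
    if 1 ≤ I.card ∧ 2 ≤ (S \ I).card ∧ a ∈ I ∧ b ∈ J ∧ c ∈ (S \ I) \ J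
    then epsm J ((S \ I) \ J) • reD R S I J ((S \ I) \ J) else 0

/-- The element `Σ_{{J,K} ∈ P(S)} ℝE_{J,K}`. -/
def relEsum (R : Type) [CommRing R] (S : Finset ℕ) : RRing R S :=
  ∑ J ∈ S.powerset.filter (fun J => J.min = S.min), reE R S J (S \ J)

/-- The ideal `I_{0,S} ⊂ R_{0,S}`. -/
def reIdeal (R : Type) [CommRing R] (S : Finset ℕ) : Ideal (RRing R S) :=
  Ideal.span (
    {x | ∃ J K J' K' : Finset ℕ, validE S J K ∧ validE S J' K' ∧
      x = reE R S J K * reE R S J' K'} ∪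
    {x | ∃ J K I' J' K' : Finset ℕ, validE S J K ∧ validD S I' J' K' ∧
      ¬ preceq J' K' J K ∧ x = reE R S J K * reD R S I' J' K'} ∪
    {x | ∃ I J K I' J' K' : Finset ℕ, validD S I J K ∧ validD S I' J' K' ∧
      ¬ preceq J K J' K' ∧ ¬ preceq J' K' J K ∧ ¬ J ∪ K ⊆ I' ∧
      x = reD R S I J K * reD R S I' J' K'} ∪
    {relEsum R S} ∪
    {x | ∃ a b c : ℕ, a ∈ S ∧ b ∈ S ∧ c ∈ S ∧ a ≠ b ∧ a ≠ c ∧ b ≠ c ∧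
      x = relE R S a b c})

/-- The element `G_{abc}` of Remark `RcM04rel_e2b2`. -/
def relG (R : Type) [CommRing R] (S : Finset ℕ) (a b c : ℕ) : RRing R S :=
  (∑ I ∈ S.powerset, ∑ J ∈ (S \ I).powerset,
    if 1 ≤ I.card ∧ 2 ≤ (S \ I).card ∧ a ∈ J ∧ b ∉ I ∧ c ∈ I
    then epsm J ((S \ I) \ J) • reD R S I J ((S \ I) \ J) else 0)
  - ∑ I ∈ S.powerset, ∑ J ∈ (S \ I).powerset,
    if 1 ≤ I.card ∧ 2 ≤ (S \ I).card ∧ a ∈ J ∧ b ∈ I ∧ c ∉ I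
    then epsm J ((S \ I) \ J) • reD R S I J ((S \ I) \ J) else 0

/-- The homomorphism `F : R_{0,[ℓ]} → R_{0,[ℓ+1]}`. -/
def Fre (R : Type) [CommRing R] (ℓ : ℕ) : RRing R (Iset ℓ) →ₐ[R] RRing R (Iset (ℓ + 1)) :=
  aeval fun ix =>
    match ix with
    | Sum.inl e =>
        reE R (Iset (ℓ + 1)) (e.1 ∪ {ℓ + 1}) (Iset ℓ \ e.1)
        + reE R (Iset (ℓ + 1)) e.1 ((Iset ℓ \ e.1) ∪ {ℓ + 1})
    | Sum.inr d =>
        reD R (Iset (ℓ + 1)) (d.1.1 ∪ {ℓ + 1}) d.1.2 ((Iset ℓ \ d.1.1) \ d.1.2)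
        + reD R (Iset (ℓ + 1)) d.1.1 (d.1.2 ∪ {ℓ + 1}) ((Iset ℓ \ d.1.1) \ d.1.2)
        + reD R (Iset (ℓ + 1)) d.1.1 d.1.2 (((Iset ℓ \ d.1.1) \ d.1.2) ∪ {ℓ + 1})

/-- `ℝẼ⁰_{J,K} = ℝD_{{ℓ+1};J,K} ∈ R_{0,[ℓ+1]}`. -/
def reEt0 (R : Type) [CommRing R] (ℓ : ℕ) (J K : Finset ℕ) : RRing R (Iset (ℓ + 1)) :=
  reD R (Iset (ℓ + 1)) {ℓ + 1} J K

/-- `ℝẼ⁻_{J,K} = ℝE_{J,K∪{ℓ+1}} ∈ R_{0,[ℓ+1]}`. -/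
def reEtm (R : Type) [CommRing R] (ℓ : ℕ) (J K : Finset ℕ) : RRing R (Iset (ℓ + 1)) :=
  reE R (Iset (ℓ + 1)) J (K ∪ {ℓ + 1})

/-- `ℝD̃⁰_{I;J,K} ∈ R_{0,[ℓ+1]}` (for `(I,{J,K})` written with `min (J∪K) ∈ J`). -/
def reDt0 (R : Type) [CommRing R] (ℓ : ℕ) (I J K : Finset ℕ) : RRing R (Iset (ℓ + 1)) :=
  if 1 ∈ I then reD R (Iset (ℓ + 1)) I (J ∪ {ℓ + 1}) K
  else reD R (Iset (ℓ + 1)) (I ∪ {ℓ + 1}) J K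

/-- `ℝD̃⁻_{I;J,K} = ℝD_{I;J,K∪{ℓ+1}} ∈ R_{0,[ℓ+1]}`. -/
def reDtm (R : Type) [CommRing R] (ℓ : ℕ) (I J K : Finset ℕ) : RRing R (Iset (ℓ + 1)) :=
  reD R (Iset (ℓ + 1)) I J (K ∪ {ℓ + 1})

/-- The homomorphism `F_{J,K} : R^{cx}_{{nd}⊔[ℓ]} → R_{0,[ℓ]}`,
`D_{J',K'} ↦ (-1)^{|K|} ε_{J∩K',K∩K'} ℝD_{J'-{nd};J∩K',K∩K'}` for `nd ∈ J'`; here `nd = 0`. -/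
def FJKre (R : Type) [CommRing R] (ℓ : ℕ) (J K : Finset ℕ) :
    CxRing R (insert 0 (Iset ℓ)) →ₐ[R] RRing R (Iset ℓ) :=
  aeval fun i =>
    ((-1 : ℤ) ^ K.card *
        epsm (J ∩ (insert 0 (Iset ℓ) \ i.1)) (K ∩ (insert 0 (Iset ℓ) \ i.1))) •
      reD R (Iset ℓ) (i.1.erase 0)
        (J ∩ (insert 0 (Iset ℓ) \ i.1)) (K ∩ (insert 0 (Iset ℓ) \ i.1))

/-- The homomorphism `F²_{I;J,K} : R^{cx}_{{nd}⊔(J∪K)} → R_{0,[ℓ]}`,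
`D_{J',K'} ↦ (-1)^{|K|} ε_{J∩K',K∩K'} ℝD_{I∪(J'-{nd});J∩K',K∩K'}` for `nd ∈ J'`;
here `nd = 0`. -/
def F2IJK (R : Type) [CommRing R] (ℓ : ℕ) (I J K : Finset ℕ) :
    CxRing R (insert 0 (J ∪ K)) →ₐ[R] RRing R (Iset ℓ) :=
  aeval fun i =>
    ((-1 : ℤ) ^ K.card *
        epsm (J ∩ (insert 0 (J ∪ K) \ i.1)) (K ∩ (insert 0 (J ∪ K) \ i.1))) •
      reD R (Iset ℓ) (I ∪ i.1.erase 0)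
        (J ∩ (insert 0 (J ∪ K) \ i.1)) (K ∩ (insert 0 (J ∪ K) \ i.1))

/-- `nd` for `{nd} ⊔ I`, identified with `min (ℤ⁺ - I)`. -/
def ndOf (I : Finset ℕ) : ℕ := sInf {n : ℕ | 0 < n ∧ n ∉ I}

/-- The homomorphism `F¹_{I;J,K} : R_{0,{nd}⊔I} → R_{0,[ℓ]}` with `nd = min (ℤ⁺ - I)`. -/
def F1IJK (R : Type) [CommRing R] (ℓ : ℕ) (I J K : Finset ℕ) :
    RRing R (insert (ndOf I) I) →ₐ[R] RRing R (Iset ℓ) :=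
  aeval fun ix =>
    match ix with
    | Sum.inl e =>
        if ndOf I ∈ e.1 then
          reE R (Iset ℓ) (J ∪ e.1.erase (ndOf I)) (K ∪ (insert (ndOf I) I \ e.1))
        else
          reE R (Iset ℓ) (J ∪ (insert (ndOf I) I \ e.1).erase (ndOf I)) (K ∪ e.1)
    | Sum.inr d =>
        if ndOf I ∈ d.1.1 then
          reD R (Iset ℓ) (d.1.1.erase (ndOf I) ∪ J ∪ K) d.1.2
            ((insert (ndOf I) I \ d.1.1) \ d.1.2)
        else if ndOf I ∈ d.1.2 then
          reD R (Iset ℓ) d.1.1 (J ∪ d.1.2.erase (ndOf I))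
            (K ∪ ((insert (ndOf I) I \ d.1.1) \ d.1.2))
        else
          reD R (Iset ℓ) d.1.1
            (J ∪ ((insert (ndOf I) I \ d.1.1) \ d.1.2).erase (ndOf I)) (K ∪ d.1.2)

/-- The homomorphism `F_{I;J,K} : R_{0,{nd}⊔I} ⊗ R^{cx}_{{nd}⊔(J∪K)} → R_{0,[ℓ]}`
induced by `F¹_{I;J,K}` and `F²_{I;J,K}`. -/
def FIJK (R : Type) [CommRing R] (ℓ : ℕ) (I J K : Finset ℕ) :
    TensorProduct R (RRing R (insert (ndOf I) I)) (CxRing R (insert 0 (J ∪ K))) →ₐ[R]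
      RRing R (Iset ℓ) :=
  Algebra.TensorProduct.productMap (F1IJK R ℓ I J K) (F2IJK R ℓ I J K)

/-
Every `D_{J,S∖J}` occurs in `R^S_{abcd}` with a coefficient determined by which of `a, b, c, d`
lie in `J`. Since `D_{J,S∖J} = D_{S∖J,J}`, both sides of the identity can be written as sums over
the partitions with `s₀ ∈ J` only, and the identity becomes a check of the resulting coefficients
over the sixteen membership patterns of `a, b, c, d`. The span statement follows: for `a ≠ s₀` the
identity expresses `R^S_{abcd}` through two generators, except when `d = b`, where the
antisymmetry `R^S_{s₀abb} = -R^S_{s₀bab}` (or `R^S_{s₀as₀s₀} = 0`) takes over.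
-/

theorem Finset.sum_powerset_eq_sum_filter_mem_add_compl {α M : Type*} [DecidableEq α]
    [AddCommMonoid M] {S : Finset α} {s₀ : α} (hs₀ : s₀ ∈ S) (f : Finset α → M) :
    ∑ J ∈ S.powerset, f J = ∑ J ∈ S.powerset with s₀ ∈ J, (f J + f (S \ J)) := by
  rw [sum_add_distrib, ← sum_filter_add_sum_filter_not S.powerset (s₀ ∈ ·)]
  congr 1
  refine sum_nbij' (S \ ·) (S \ ·) ?_ ?_ ?_ ?_ ?_ <;>
    simp +contextual [hs₀]

theorem Finset.eq_empty_of_disjoint_of_min_eq {α : Type*} [LinearOrder α] {J K : Finset α} (hJK : Disjoint J K)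
    (h : J.min = K.min) : J = ∅ := by
  by_contra hJ
  obtain ⟨m, hm⟩ := min_of_nonempty (nonempty_iff_ne_empty.mpr hJ)
  exact disjoint_left.mp hJK (mem_of_min hm) (mem_of_min (h ▸ hm))

/-- The coefficient of `D_{J,S∖J}` in `R^S_{abcd}`, as a function of whether `a, b, c, d ∈ J`. -/
def relCoeff (a b c d : Bool) : ℤ :=
  (if a && b && !c && !d then 1 else 0) - (if a && c && !b && !d then 1 else 0)

theorem relCoeff_add_not_eq (a b c d : Bool) :
    relCoeff a b c d + relCoeff (!a) (!b) (!c) (!d) =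
      (relCoeff true a d c + relCoeff false (!a) (!d) (!c)) -
        (relCoeff true a d b + relCoeff false (!a) (!d) (!b)) := by
  revert a b c d
  decide

section CxRel

variable {R : Type} [CommRing R] {S : Finset ℕ}

theorem cxD_comm (J K : Finset ℕ) : cxD R S J K = cxD R S K J := by
  have hsymm : (Disjoint J K ∧ J ∪ K = S) ↔ (Disjoint K J ∧ K ∪ J = S) := by
    rw [disjoint_comm, union_comm]
  unfold cxD
  by_cases hP : Disjoint J K ∧ J ∪ K = S
  · rw [if_pos hP, if_pos (hsymm.mp hP)]
    rcases lt_trichotomy J.min K.min with hlt | heq | hgt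
    · rw [if_pos hlt.le, if_neg (not_le.mpr hlt)]
    · rw [eq_empty_of_disjoint_of_min_eq hP.1 heq,
        eq_empty_of_disjoint_of_min_eq hP.1.symm heq.symm]
    · rw [if_neg (not_le.mpr hgt), if_pos hgt.le]
  · rw [if_neg hP, if_neg (mt hsymm.mpr hP)]

theorem cxD_sdiff_eq_zero {J : Finset ℕ} (hJ : J ⊆ S)
    (h : ¬(2 ≤ J.card ∧ 2 ≤ (S \ J).card)) : cxD R S J (S \ J) = 0 := by
  unfold cxD cxXv
  rw [if_pos ⟨disjoint_sdiff, union_sdiff_of_subset hJ⟩]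
  simp only [Finset.sdiff_sdiff_eq_self hJ]
  split_ifs <;> tauto

theorem cxRel_eq_sum_relCoeff {a b c d : ℕ} (hb : b ∈ S) (hc : c ∈ S) (hd : d ∈ S) :
    cxRel R S a b c d =
      ∑ J ∈ S.powerset, relCoeff (a ∈ J) (b ∈ J) (c ∈ J) (d ∈ J) • cxD R S J (S \ J) := by
  unfold cxRel
  rw [← sum_sub_distrib]
  refine sum_congr rfl fun J hJ => ?_
  by_cases hcard : 2 ≤ J.card ∧ 2 ≤ (S \ J).card
  · simp only [mem_sdiff, hb, hc, hd, hcard, true_and, relCoeff]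
    split_ifs <;> simp_all
  · rw [cxD_sdiff_eq_zero (mem_powerset.mp hJ) hcard]
    simp

theorem cxRel_eq_sum_filter_mem {s₀ a b c d : ℕ} (hs₀ : s₀ ∈ S) (ha : a ∈ S) (hb : b ∈ S)
    (hc : c ∈ S) (hd : d ∈ S) :
    cxRel R S a b c d =
      ∑ J ∈ S.powerset with s₀ ∈ J,
        (relCoeff (a ∈ J) (b ∈ J) (c ∈ J) (d ∈ J) +
          relCoeff (!(a ∈ J)) (!(b ∈ J)) (!(c ∈ J)) (!(d ∈ J))) • cxD R S J (S \ J) := by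
  rw [cxRel_eq_sum_relCoeff hb hc hd, sum_powerset_eq_sum_filter_mem_add_compl hs₀]
  refine sum_congr rfl fun J hJ => ?_
  have hJS : J ⊆ S := mem_powerset.mp (mem_filter.mp hJ).1
  rw [Finset.sdiff_sdiff_eq_self hJS, cxD_comm (S \ J), add_smul]
  simp [ha, hb, hc, hd]

theorem cxRel_eq_sub {s₀ a b c d : ℕ} (hs₀ : s₀ ∈ S) (ha : a ∈ S) (hb : b ∈ S) (hc : c ∈ S)
    (hd : d ∈ S) : cxRel R S a b c d = cxRel R S s₀ a d c - cxRel R S s₀ a d b := by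
  rw [cxRel_eq_sum_filter_mem hs₀ ha hb hc hd, cxRel_eq_sum_filter_mem hs₀ hs₀ ha hd hc,
    cxRel_eq_sum_filter_mem hs₀ hs₀ ha hd hb, ← sum_sub_distrib]
  refine sum_congr rfl fun J hJ => ?_
  rw [← sub_smul, decide_eq_true (mem_filter.mp hJ).2, relCoeff_add_not_eq]
  rfl

theorem cxRel_swap_mid (a b c d : ℕ) : cxRel R S a c b d = -cxRel R S a b c d := by
  unfold cxRel
  rw [neg_sub]

theorem cxRel_self_fourth_eq_zero (a b c : ℕ) : cxRel R S a b c a = 0 := by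
  unfold cxRel
  rw [sub_eq_zero]
  refine sum_congr rfl fun J _ => ?_
  rw [if_neg (by simp +contextual), if_neg (by simp +contextual)]

theorem cxRel_mem_span_cxRel_first {s₀ a b c d : ℕ} (hs₀ : s₀ ∈ S) (ha : a ∈ S) (hb : b ∈ S)
    (hc : c ∈ S) (hd : d ∈ S) (hab : a ≠ b) (hcd : c ≠ d) :
    cxRel R S a b c d ∈ Submodule.span ℤ {x : CxRing R S | ∃ b' c' d' : ℕ,
      b' ∈ S ∧ c' ∈ S ∧ d' ∈ S ∧ s₀ ≠ b' ∧ c' ≠ d' ∧ x = cxRel R S s₀ b' c' d'} := by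
  set V := Submodule.span ℤ {x : CxRing R S | ∃ b' c' d' : ℕ,
    b' ∈ S ∧ c' ∈ S ∧ d' ∈ S ∧ s₀ ≠ b' ∧ c' ≠ d' ∧ x = cxRel R S s₀ b' c' d'}
  have generator {b' c' d' : ℕ} (hb' : b' ∈ S) (hc' : c' ∈ S) (hd' : d' ∈ S) (hsb : s₀ ≠ b')
      (hcd : c' ≠ d') : cxRel R S s₀ b' c' d' ∈ V :=
    Submodule.subset_span ⟨b', c', d', hb', hc', hd', hsb, hcd, rfl⟩
  obtain rfl | has := eq_or_ne a s₀
  · exact generator hb hc hd hab hcd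
  rw [cxRel_eq_sub hs₀ ha hb hc hd]
  refine V.sub_mem (generator ha hd hc has.symm hcd.symm) ?_
  obtain rfl | hdb := eq_or_ne d b
  · obtain rfl | hds := eq_or_ne d s₀
    · rw [cxRel_self_fourth_eq_zero]
      exact V.zero_mem
    · rw [cxRel_swap_mid s₀ d a d]
      exact V.neg_mem (generator hd ha hd hds.symm hab)
  · exact generator ha hd hb has.symm hdb

end CxRel

theorem stmt0_general (S : Finset ℕ) (s₀ a b c d : ℕ)
    (hs₀ : s₀ ∈ S) (ha : a ∈ S) (hb : b ∈ S) (hc : c ∈ S) (hd : d ∈ S) :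
    cxRel ℤ S a b c d = cxRel ℤ S s₀ a d c - cxRel ℤ S s₀ a d b ∧
    ∀ a' b' c' d' : ℕ, a' ∈ S → b' ∈ S → c' ∈ S → d' ∈ S → a' ≠ b' → c' ≠ d' →
      cxRel ℤ S a' b' c' d' ∈
        Submodule.span ℤ {x : CxRing ℤ S | ∃ b'' c'' d'' : ℕ,
          b'' ∈ S ∧ c'' ∈ S ∧ d'' ∈ S ∧ s₀ ≠ b'' ∧ c'' ≠ d'' ∧
          x = cxRel ℤ S s₀ b'' c'' d''} :=
  ⟨cxRel_eq_sub hs₀ ha hb hc hd, fun _ _ _ _ => cxRel_mem_span_cxRel_first hs₀⟩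

/-- The identity `R^S_{abcd} = R^S_{s₀adc} − R^S_{s₀adb}` and the consequence
that all the elements `R^S_{abcd}` lie in the ℤ-linear span of those with first index `s₀`. -/
theorem stmt0 (S : Finset ℕ) (s₀ a b c d : ℕ)
    (hs₀ : s₀ ∈ S) (ha : a ∈ S) (hb : b ∈ S) (hc : c ∈ S) (hd : d ∈ S)
    (has : a ≠ s₀) (hbs : b ≠ s₀) (hcs : c ≠ s₀) (hds : d ≠ s₀)
    (hab : a ≠ b) (hac : a ≠ c) (had : a ≠ d) (hbc : b ≠ c) (hbd : b ≠ d) (hcd : c ≠ d) :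
    cxRel ℤ S a b c d = cxRel ℤ S s₀ a d c - cxRel ℤ S s₀ a d b ∧
    ∀ a' b' c' d' : ℕ, a' ∈ S → b' ∈ S → c' ∈ S → d' ∈ S → a' ≠ b' → c' ≠ d' →
      cxRel ℤ S a' b' c' d' ∈
        Submodule.span ℤ {x : CxRing ℤ S | ∃ b'' c'' d'' : ℕ,
          b'' ∈ S ∧ c'' ∈ S ∧ d'' ∈ S ∧ s₀ ≠ b'' ∧ c'' ≠ d'' ∧
          x = cxRel ℤ S s₀ b'' c'' d''} :=
  stmt0_general S s₀ a b c d hs₀ ha hb hc hd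

end
end

section
/- Let ℓ≥3 be an integer, {J,K} ∈ P•(ℓ), a ∈ J, and b,c,d ∈ K distinct. Then in R_{[ℓ]} one has the identity F_J(R^{{nd}⊔K}_{(nd)bcd}) − R^{[ℓ]}_{abcd} = − Σ_{{J',K'}∈P•(ℓ): a,b∈J', c,d∈K', {J,K}⋂̸{J',K'}} D_{J',K'} + Σ_{{J',K'}∈P•(ℓ): a,c∈J', b,d∈K', {J,K}⋂̸{J',K'}} D_{J',K'}. -/
open MvPolynomial Finset TensorProduct

noncomputable section

/-! `F_J` sends `D_{{nd}∪B, K∖B}` to `D_{J∪B, K∖B}`, so `F_J(R^{{nd}⊔K}_{(nd)bcd})` is the part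
of `R^{[ℓ]}_{abcd}` indexed by the pairs `{J',K'}` with `J ⊆ J'`. Because `a ∈ J` and
`b, c, d ∈ K`, every other pair occurring in `R^{[ℓ]}_{abcd}` satisfies `{J,K} ⋂̸ {J',K'}`:
`J ⊄ K'` as `a ∈ J'`, and neither `J'` nor `K'` lies in `J` as each contains one of `b, c, d`. -/

lemma Finset.sum_powerset_eq_sum_union_of_disjoint {α M : Type*} [DecidableEq α] [AddCommMonoid M]
    {S J K : Finset α} (hd : Disjoint J K) (hu : J ∪ K = S) (f : Finset α → M)
    (hf : ∀ A ∈ S.powerset, ¬ J ⊆ A → f A = 0) :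
    ∑ A ∈ S.powerset, f A = ∑ B ∈ K.powerset, f (J ∪ B) := by
  subst hu
  have hfilter : {A ∈ (J ∪ K).powerset | J ⊆ A} = K.powerset.image (J ∪ ·) := by
    ext A
    simp only [mem_filter, mem_powerset, mem_image]
    constructor
    · rintro ⟨hAJK, hJA⟩
      exact ⟨A \ J, sdiff_le_iff.mpr hAJK, union_sdiff_of_subset hJA⟩
    · rintro ⟨B, hBK, rfl⟩
      exact ⟨union_subset_union_right hBK, subset_union_left⟩
  have hinj : Set.InjOn (J ∪ ·) K.powerset := fun B₁ hB₁ B₂ hB₂ h => by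
    rw [← union_sdiff_cancel_left (hd.mono_right (mem_powerset.mp hB₁)),
      ← union_sdiff_cancel_left (hd.mono_right (mem_powerset.mp hB₂))]
    exact congrArg (· \ J) h
  rw [← sum_filter_of_ne fun A hA h => by_contra fun hJA => h (hf A hA hJA), hfilter,
    sum_image hinj]

lemma Finset.min_eq_zero_of_mem {A : Finset ℕ} (h : 0 ∈ A) : A.min = 0 :=
  le_antisymm (min_le h) zero_le

lemma cxD_sdiff_eq_X (R : Type) [CommRing R] (S A : Finset ℕ)
    (h : A ⊆ S ∧ 2 ≤ A.card ∧ 2 ≤ (S \ A).card ∧ A.min = S.min)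
    (hle : A.min ≤ (S \ A).min) :
    cxD R S A (S \ A) = X ⟨A, h⟩ := by
  rw [cxD, if_pos ⟨disjoint_sdiff, union_sdiff_of_subset h.1⟩, if_pos hle, cxXv, dif_pos h]

lemma zero_notMem_of_union_eq_Iset {P K : Finset ℕ} {ℓ : ℕ} (hun : P ∪ K = Iset ℓ) : 0 ∉ K :=
  fun h => by simpa using (hun ▸ subset_union_right : K ⊆ Iset ℓ) h

lemma insert_zero_sdiff_insert_zero {P K B : Finset ℕ} {ℓ : ℕ} (hdisj : Disjoint P K)
    (hun : P ∪ K = Iset ℓ) : insert 0 K \ insert 0 B = Iset ℓ \ (P ∪ B) := by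
  have h0K := zero_notMem_of_union_eq_Iset hun
  rw [← hun]
  ext n
  simp only [mem_sdiff, mem_insert, mem_union]
  have : n ∈ P → n ∉ K := fun h => disjoint_left.mp hdisj h
  grind

lemma FJcx_cxD_insert_zero (R : Type) [CommRing R] (ℓ : ℕ) {P K B : Finset ℕ}
    (hdisj : Disjoint P K) (hun : P ∪ K = Iset ℓ) (hBK : B ⊆ K) (hB : B.Nonempty)
    (hKB : 2 ≤ (insert 0 K \ insert 0 B).card) :
    FJcx R ℓ P K (cxD R (insert 0 K) (insert 0 B) (insert 0 K \ insert 0 B)) =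
      cxD R (Iset ℓ) (P ∪ B) (Iset ℓ \ (P ∪ B)) := by
  have h0B : 0 ∉ B := fun h => zero_notMem_of_union_eq_Iset hun (hBK h)
  have hidx : insert 0 B ⊆ insert 0 K ∧ 2 ≤ (insert 0 B).card ∧
      2 ≤ (insert 0 K \ insert 0 B).card ∧ (insert 0 B).min = (insert 0 K).min :=
    ⟨insert_subset_insert 0 hBK, by simpa [card_insert_of_notMem h0B] using hB.card_pos, hKB,
      by rw [min_eq_zero_of_mem (mem_insert_self 0 B), min_eq_zero_of_mem (mem_insert_self 0 K)]⟩
  rw [cxD_sdiff_eq_X R _ _ hidx (by rw [min_eq_zero_of_mem (mem_insert_self 0 B)]; exact zero_le),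
    FJcx, aeval_X, erase_insert h0B, insert_zero_sdiff_insert_zero hdisj hun]

lemma FJcx_sum_cxD_insert_zero (R : Type) [CommRing R] (ℓ : ℕ) {P K : Finset ℕ}
    (hdisj : Disjoint P K) (hun : P ∪ K = Iset ℓ) {a x y z : ℕ} (haP : a ∈ P) (hx : x ∈ K)
    (hy : y ∈ K) (hz : z ∈ K) (hyz : y ≠ z) :
    FJcx R ℓ P K (∑ A ∈ (insert 0 K).powerset,
      if 2 ≤ A.card ∧ 2 ≤ (insert 0 K \ A).card ∧ 0 ∈ A ∧ x ∈ A ∧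
         y ∈ insert 0 K \ A ∧ z ∈ insert 0 K \ A
      then cxD R (insert 0 K) A (insert 0 K \ A) else 0) =
    ∑ J' ∈ (Iset ℓ).powerset,
      if 2 ≤ J'.card ∧ 2 ≤ (Iset ℓ \ J').card ∧ a ∈ J' ∧ x ∈ J' ∧
         y ∈ Iset ℓ \ J' ∧ z ∈ Iset ℓ \ J' ∧ P ⊆ J'
      then cxD R (Iset ℓ) J' (Iset ℓ \ J') else 0 := by
  have h0K := zero_notMem_of_union_eq_Iset hun
  have hxP : x ∉ P := disjoint_right.mp hdisj hx
  have hx0 : x ≠ 0 := fun h => h0K (h ▸ hx)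
  rw [map_sum, sum_powerset_insert h0K,
    sum_eq_zero fun A hA => by
      rw [if_neg fun h => h0K (mem_powerset.mp hA h.2.2.1), map_zero], zero_add,
    sum_powerset_eq_sum_union_of_disjoint hdisj hun _ fun A _ h => if_neg fun hc => h hc.2.2.2.2.2.2]
  refine sum_congr rfl fun B hB => ?_
  have hBK := mem_powerset.mp hB
  have hD := insert_zero_sdiff_insert_zero (B := B) hdisj hun
  have hmemD : ∀ n ∈ K, n ∈ Iset ℓ \ (P ∪ B) ↔ n ∉ B := fun n hn => by
    rw [← hun]
    simp [hn, disjoint_right.mp hdisj hn]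
  simp only [hD, hmemD y hy, hmemD z hz]
  by_cases hs : x ∈ B ∧ y ∉ B ∧ z ∉ B
  · obtain ⟨hxB, hyB, hzB⟩ := hs
    have hcard : 2 ≤ (Iset ℓ \ (P ∪ B)).card :=
      one_lt_card.mpr ⟨y, (hmemD y hy).mpr hyB, z, (hmemD z hz).mpr hzB, hyz⟩
    rw [if_pos ⟨one_lt_card.mpr ⟨0, mem_insert_self 0 B, x, mem_insert_of_mem hxB, hx0.symm⟩,
        hcard, mem_insert_self 0 B, mem_insert_of_mem hxB, hyB, hzB⟩,
      if_pos ⟨one_lt_card.mpr ⟨a, mem_union_left B haP, x, mem_union_right P hxB,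
        fun h => hxP (h ▸ haP)⟩, hcard, mem_union_left B haP, mem_union_right P hxB, hyB, hzB,
        subset_union_left⟩,
      ← hD, FJcx_cxD_insert_zero R ℓ hdisj hun hBK ⟨x, hxB⟩ (hD ▸ hcard), hD]
  · rw [if_neg fun h => hs ⟨(mem_insert.mp h.2.2.2.1).resolve_left hx0, h.2.2.2.2⟩, map_zero,
      if_neg fun h => hs ⟨(mem_union.mp h.2.2.2.1).resolve_left hxP, h.2.2.2.2.1, h.2.2.2.2.2.1⟩]

lemma ncapCx_iff_not_subset {S J J' : Finset ℕ} {a x y : ℕ} (haJ : a ∈ J) (hxJ : x ∉ J)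
    (hyJ : y ∉ J) (ha : a ∈ J') (hx : x ∈ J') (hy : y ∈ S \ J') :
    NcapCx J J' (S \ J') ↔ ¬ J ⊆ J' :=
  ⟨And.left, fun h => ⟨h, fun hs => (mem_sdiff.mp (hs haJ)).2 ha, fun hs => hxJ (hs hx),
    fun hs => hyJ (hs hy)⟩⟩

lemma sum_cxD_eq_sum_subset_add_sum_ncapCx (R : Type) [CommRing R] (S J : Finset ℕ)
    {a x y z : ℕ} (haJ : a ∈ J) (hxJ : x ∉ J) (hyJ : y ∉ J) :
    ∑ J' ∈ S.powerset,
      (if 2 ≤ J'.card ∧ 2 ≤ (S \ J').card ∧ a ∈ J' ∧ x ∈ J' ∧ y ∈ S \ J' ∧ z ∈ S \ J'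
      then cxD R S J' (S \ J') else 0) =
    (∑ J' ∈ S.powerset,
      if 2 ≤ J'.card ∧ 2 ≤ (S \ J').card ∧ a ∈ J' ∧ x ∈ J' ∧ y ∈ S \ J' ∧ z ∈ S \ J' ∧ J ⊆ J'
      then cxD R S J' (S \ J') else 0)
    + ∑ J' ∈ S.powerset,
      if 2 ≤ J'.card ∧ 2 ≤ (S \ J').card ∧ a ∈ J' ∧ x ∈ J' ∧ y ∈ S \ J' ∧ z ∈ S \ J' ∧
        NcapCx J J' (S \ J')
      then cxD R S J' (S \ J') else 0 := by
  rw [← sum_add_distrib]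
  refine sum_congr rfl fun J' _ => ?_
  by_cases h : 2 ≤ J'.card ∧ 2 ≤ (S \ J').card ∧ a ∈ J' ∧ x ∈ J' ∧ y ∈ S \ J' ∧ z ∈ S \ J'
  · have hN := ncapCx_iff_not_subset haJ hxJ hyJ h.2.2.1 h.2.2.2.1 h.2.2.2.2.1
    by_cases hJ : J ⊆ J' <;> simp [h, hN, hJ]
  · have hC (q : Prop) : ¬ (2 ≤ J'.card ∧ 2 ≤ (S \ J').card ∧ a ∈ J' ∧ x ∈ J' ∧
        y ∈ S \ J' ∧ z ∈ S \ J' ∧ q) :=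
      fun ⟨h₁, h₂, h₃, h₄, h₅, h₆, _⟩ => h ⟨h₁, h₂, h₃, h₄, h₅, h₆⟩
    rw [if_neg h, if_neg (hC _), if_neg (hC _), add_zero]

theorem stmt2_general (ℓ : ℕ) (J K : Finset ℕ)
    (hdisj : Disjoint J K) (hun : J ∪ K = Iset ℓ)
    (a b c d : ℕ) (haJ : a ∈ J) (hbK : b ∈ K) (hcK : c ∈ K) (hdK : d ∈ K)
    (hbd : b ≠ d) (hcd : c ≠ d) :
    FJcx ℤ ℓ J K (cxRel ℤ (insert 0 K) 0 b c d) - cxRel ℤ (Iset ℓ) a b c d =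
      -(∑ J' ∈ (Iset ℓ).powerset,
          if 2 ≤ J'.card ∧ 2 ≤ (Iset ℓ \ J').card ∧
             a ∈ J' ∧ b ∈ J' ∧ c ∈ Iset ℓ \ J' ∧ d ∈ Iset ℓ \ J' ∧
             NcapCx J J' (Iset ℓ \ J')
          then cxD ℤ (Iset ℓ) J' (Iset ℓ \ J') else 0)
      + ∑ J' ∈ (Iset ℓ).powerset,
          if 2 ≤ J'.card ∧ 2 ≤ (Iset ℓ \ J').card ∧
             a ∈ J' ∧ c ∈ J' ∧ b ∈ Iset ℓ \ J' ∧ d ∈ Iset ℓ \ J' ∧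
             NcapCx J J' (Iset ℓ \ J')
          then cxD ℤ (Iset ℓ) J' (Iset ℓ \ J') else 0 := by
  have hbJ : b ∉ J := disjoint_right.mp hdisj hbK
  have hcJ : c ∉ J := disjoint_right.mp hdisj hcK
  rw [cxRel, cxRel, map_sub,
    FJcx_sum_cxD_insert_zero ℤ ℓ hdisj hun haJ hbK hcK hdK hcd,
    FJcx_sum_cxD_insert_zero ℤ ℓ hdisj hun haJ hcK hbK hdK hbd,
    sum_cxD_eq_sum_subset_add_sum_ncapCx ℤ _ J haJ hbJ hcJ,
    sum_cxD_eq_sum_subset_add_sum_ncapCx ℤ _ J haJ hcJ hbJ]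
  abel

/-- The identity for `F_J(R^{{nd}⊔K}_{(nd)bcd}) − R^{[ℓ]}_{abcd}` in `R_{[ℓ]}`. -/
theorem stmt2 (ℓ : ℕ) (hℓ : 3 ≤ ℓ) (J K : Finset ℕ)
    (hdisj : Disjoint J K) (hun : J ∪ K = Iset ℓ) (hJ : 2 ≤ J.card) (hK : 2 ≤ K.card)
    (a b c d : ℕ) (haJ : a ∈ J) (hbK : b ∈ K) (hcK : c ∈ K) (hdK : d ∈ K)
    (hbc : b ≠ c) (hbd : b ≠ d) (hcd : c ≠ d) :
    FJcx ℤ ℓ J K (cxRel ℤ (insert 0 K) 0 b c d) - cxRel ℤ (Iset ℓ) a b c d =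
      -(∑ J' ∈ (Iset ℓ).powerset,
          if 2 ≤ J'.card ∧ 2 ≤ (Iset ℓ \ J').card ∧
             a ∈ J' ∧ b ∈ J' ∧ c ∈ Iset ℓ \ J' ∧ d ∈ Iset ℓ \ J' ∧
             NcapCx J J' (Iset ℓ \ J')
          then cxD ℤ (Iset ℓ) J' (Iset ℓ \ J') else 0)
      + ∑ J' ∈ (Iset ℓ).powerset,
          if 2 ≤ J'.card ∧ 2 ≤ (Iset ℓ \ J').card ∧
             a ∈ J' ∧ c ∈ J' ∧ b ∈ Iset ℓ \ J' ∧ d ∈ Iset ℓ \ J' ∧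
             NcapCx J J' (Iset ℓ \ J')
          then cxD ℤ (Iset ℓ) J' (Iset ℓ \ J') else 0 :=
  stmt2_general ℓ J K hdisj hun a b c d haJ hbK hcK hdK hbd hcd

end
end

section
/- Let S be a finite totally ordered set, s₀ ∈ S, and a,b,c ∈ S−{s₀} distinct. Then in the polynomial ring R_{0,S} (over any commutative ring R with unity) one has the identity E^S_{abc} = E^S_{s₀bc} + E^S_{bas₀} − E^S_{cas₀}. Consequently, the collection of all elements E^S_{abc} (a,b,c ∈ S distinct) is contained in the R-linear span of the subcollection of those in which s₀ occurs among the three indices. -/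
open MvPolynomial Finset TensorProduct

noncomputable section

/-! Over the ordered partitions `S = I ⊔ J ⊔ K`, `E^S_{abc}` is a sum of terms
`c_{abc} · ε_{J,K} ℝD_{I;J,K}` whose integer coefficient `c_{abc}` depends only on the blocks
containing `a`, `b`, `c`. Exchanging `J` and `K` negates `ε_{J,K} ℝD_{I;J,K}` but leaves the
combination `c_{abc} - c_{s₀bc} - c_{bas₀} + c_{cas₀}` unchanged (a check over the `3⁴` placements
of `s₀, a, b, c`), so the terms of `E_{abc} - (E_{s₀bc} + E_{bas₀} - E_{cas₀})` cancel in pairs.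
The span statement is the identity applied to indices avoiding `s₀`. -/

namespace Finset

theorem min_ne_min_of_disjoint {α : Type*} [LinearOrder α] {J K : Finset α} (hd : Disjoint J K)
    (hne : (J ∪ K).Nonempty) : J.min ≠ K.min := by
  intro h
  obtain ⟨m, hm⟩ := min_of_nonempty hne
  rw [min_union, ← h, inf_idem] at hm
  exact disjoint_left.mp hd (mem_of_min hm) (mem_of_min (h ▸ hm))

theorem sum_powerset_eq_zero_of_sdiff_eq_neg {α M : Type*} [DecidableEq α] [AddCommGroup M]
    {T : Finset α} (hT : T.Nonempty) {f : Finset α → M} (hf : ∀ J ⊆ T, f (T \ J) = -f J) :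
    ∑ J ∈ T.powerset, f J = 0 := by
  refine sum_involution (fun J _ => T \ J) (fun J hJ => ?_) (fun J _ _ hfix => ?_)
    (fun J _ => mem_powerset.mpr sdiff_subset)
    (fun J hJ => sdiff_sdiff_eq_self (mem_powerset.mp hJ))
  · rw [hf J (mem_powerset.mp hJ), add_neg_cancel]
  · have hJ : Disjoint J (T \ J) := disjoint_sdiff
    rw [hfix, disjoint_self] at hJ
    subst hJ
    exact hT.ne_empty (by simpa using hfix)

end Finset

open Equiv

theorem epsm_comm {J K : Finset ℕ} (h : J.min ≠ K.min) : epsm K J = -epsm J K := by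
  rcases h.lt_or_gt with hlt | hlt
  · simp [epsm, hlt.le, hlt.not_ge]
  · simp [epsm, hlt.le, hlt.not_ge]

theorem reD_comm (R : Type) [CommRing R] (S I : Finset ℕ) {J K : Finset ℕ}
    (h : J.min ≠ K.min) : reD R S I K J = reD R S I J K := by
  rcases h.lt_or_gt with hlt | hlt <;>
    simp [reD, hlt.le, hlt.not_ge, union_comm K J, disjoint_comm (a := K)]

/-- `ε_{J,K} ℝD_{I;J,K}` for the partition `S = I ⊔ J ⊔ K`, `K = (S - I) - J`. -/
def signedD (R : Type) [CommRing R] (S I J : Finset ℕ) : RRing R S :=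
  epsm J ((S \ I) \ J) • reD R S I J ((S \ I) \ J)

theorem signedD_sdiff (R : Type) [CommRing R] {S I J : Finset ℕ} (hJ : J ⊆ S \ I)
    (hI : (S \ I).Nonempty) : signedD R S I ((S \ I) \ J) = -signedD R S I J := by
  have hmin : J.min ≠ ((S \ I) \ J).min :=
    min_ne_min_of_disjoint disjoint_sdiff (by rwa [union_sdiff_of_subset hJ])
  rw [signedD, signedD, Finset.sdiff_sdiff_eq_self hJ, epsm_comm hmin, reD_comm R S I hmin,
    neg_smul]

/-- The block of `x` in `S = I ⊔ J ⊔ K`, encoded as `0`, `1`, `2` for `I`, `J`, `K`. -/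
def blockOf (I J : Finset ℕ) (x : ℕ) : Fin 3 :=
  if x ∈ I then 0 else if x ∈ J then 1 else 2

theorem blockOf_sdiff {S I J : Finset ℕ} {x : ℕ} (hx : x ∈ S) :
    blockOf I ((S \ I) \ J) x = swap 1 2 (blockOf I J x) := by
  by_cases hxI : x ∈ I
  · simp [blockOf, hxI, swap_apply_of_ne_of_ne]
  · by_cases hxJ : x ∈ J <;> simp [blockOf, hxI, hxJ, hx]

theorem blockOf_eq_zero_iff {I J : Finset ℕ} {x : ℕ} : blockOf I J x = 0 ↔ x ∈ I := by
  by_cases hxI : x ∈ I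
  · simp [blockOf, hxI]
  · by_cases hxJ : x ∈ J <;> simp [blockOf, hxI, hxJ]

theorem blockOf_eq_one_iff {S I J : Finset ℕ} (hJ : J ⊆ S \ I) {x : ℕ} :
    blockOf I J x = 1 ↔ x ∈ J := by
  by_cases hxI : x ∈ I
  · have hxJ : x ∉ J := fun hxJ => (mem_sdiff.mp (hJ hxJ)).2 hxI
    simp [blockOf, hxI, hxJ]
  · by_cases hxJ : x ∈ J <;> simp [blockOf, hxI, hxJ]

theorem blockOf_eq_two_iff {S I J : Finset ℕ} {x : ℕ} (hx : x ∈ S) :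
    blockOf I J x = 2 ↔ x ∈ (S \ I) \ J := by
  by_cases hxI : x ∈ I
  · simp [blockOf, hxI]
  · by_cases hxJ : x ∈ J <;> simp [blockOf, hxI, hxJ, hx]

/-- The coefficient of `ε_{J,K} ℝD_{I;J,K}` in `E^S_{abc}`, given the blocks of `a`, `b`, `c`. -/
def relECoeff (pa pb pc : Fin 3) : ℤ :=
  (if pa = 1 ∧ pb = 1 ∧ pc = 0 then 1 else 0) - (if pa = 1 ∧ pc = 1 ∧ pb = 0 then 1 else 0)
    - (if pa = 0 ∧ pb = 1 ∧ pc = 2 then 1 else 0)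

theorem relECoeff_combination_swap (ps pa pb pc : Fin 3) :
    relECoeff (swap 1 2 pa) (swap 1 2 pb) (swap 1 2 pc)
        - (relECoeff (swap 1 2 ps) (swap 1 2 pb) (swap 1 2 pc)
          + relECoeff (swap 1 2 pb) (swap 1 2 pa) (swap 1 2 ps)
          - relECoeff (swap 1 2 pc) (swap 1 2 pa) (swap 1 2 ps))
      = relECoeff pa pb pc
        - (relECoeff ps pb pc + relECoeff pb pa ps - relECoeff pc pa ps) := by
  revert ps pa pb pc
  decide

theorem relECoeff_blockOf {S I J : Finset ℕ} (hJ : J ⊆ S \ I) (a b : ℕ) {c : ℕ} (hc : c ∈ S) :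
    relECoeff (blockOf I J a) (blockOf I J b) (blockOf I J c) =
      (if a ∈ J ∧ b ∈ J ∧ c ∈ I then 1 else 0) - (if a ∈ J ∧ c ∈ J ∧ b ∈ I then 1 else 0)
        - (if a ∈ I ∧ b ∈ J ∧ c ∈ (S \ I) \ J then 1 else 0) := by
  simp only [relECoeff, blockOf_eq_zero_iff, blockOf_eq_one_iff hJ, blockOf_eq_two_iff hc]

theorem relE_eq_sum_relECoeff_smul (R : Type) [CommRing R] {S : Finset ℕ} (a b : ℕ) {c : ℕ}
    (hc : c ∈ S) :
    relE R S a b c = ∑ I ∈ S.powerset, ∑ J ∈ (S \ I).powerset,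
      if 1 ≤ I.card ∧ 2 ≤ (S \ I).card then
        relECoeff (blockOf I J a) (blockOf I J b) (blockOf I J c) • signedD R S I J
      else 0 := by
  simp only [relE, ← sum_sub_distrib]
  refine sum_congr rfl fun I _ => sum_congr rfl fun J hJ => ?_
  by_cases hI : 1 ≤ I.card ∧ 2 ≤ (S \ I).card
  · simp only [hI, true_and, if_true, relECoeff_blockOf (mem_powerset.mp hJ) a b hc, sub_smul,
      ite_smul, one_smul, zero_smul, signedD]
  · rw [not_and_or] at hI
    rcases hI with hI | hI <;> simp [hI]

theorem relE_eq_add_sub (R : Type) [CommRing R] {S : Finset ℕ} {s₀ a b c : ℕ} (hs₀ : s₀ ∈ S)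
    (ha : a ∈ S) (hb : b ∈ S) (hc : c ∈ S) :
    relE R S a b c = relE R S s₀ b c + relE R S b a s₀ - relE R S c a s₀ := by
  rw [← sub_eq_zero, relE_eq_sum_relECoeff_smul R a b hc, relE_eq_sum_relECoeff_smul R s₀ b hc,
    relE_eq_sum_relECoeff_smul R b a hs₀, relE_eq_sum_relECoeff_smul R c a hs₀]
  simp only [← sum_add_distrib, ← sum_sub_distrib]
  refine sum_eq_zero fun I _ => ?_
  by_cases hI : 1 ≤ I.card ∧ 2 ≤ (S \ I).card
  swap
  · simp only [if_neg hI, sum_const_zero, add_zero, sub_zero]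
  simp only [hI, and_self, if_true, ← sub_smul, ← add_smul]
  refine sum_powerset_eq_zero_of_sdiff_eq_neg (card_pos.mp (by omega)) fun J hJ => ?_
  rw [signedD_sdiff R hJ (card_pos.mp (by omega)), blockOf_sdiff hs₀, blockOf_sdiff ha,
    blockOf_sdiff hb, blockOf_sdiff hc, relECoeff_combination_swap, smul_neg]

theorem stmt7_general (R : Type) [CommRing R] (S : Finset ℕ) (s₀ a b c : ℕ)
    (hs₀ : s₀ ∈ S) (ha : a ∈ S) (hb : b ∈ S) (hc : c ∈ S) :
    relE R S a b c = relE R S s₀ b c + relE R S b a s₀ - relE R S c a s₀ ∧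
    ∀ a' b' c' : ℕ, a' ∈ S → b' ∈ S → c' ∈ S → a' ≠ b' → a' ≠ c' → b' ≠ c' →
      relE R S a' b' c' ∈ Submodule.span R
        {x : RRing R S | ∃ a'' b'' c'' : ℕ, a'' ∈ S ∧ b'' ∈ S ∧ c'' ∈ S ∧
          a'' ≠ b'' ∧ a'' ≠ c'' ∧ b'' ≠ c'' ∧ (s₀ = a'' ∨ s₀ = b'' ∨ s₀ = c'') ∧
          x = relE R S a'' b'' c''} := by
  refine ⟨relE_eq_add_sub R hs₀ ha hb hc, fun a' b' c' ha' hb' hc' hab' hac' hbc' => ?_⟩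
  by_cases hmem : s₀ = a' ∨ s₀ = b' ∨ s₀ = c'
  · exact Submodule.subset_span ⟨a', b', c', ha', hb', hc', hab', hac', hbc', hmem, rfl⟩
  obtain ⟨hsa, hsb, hsc⟩ : s₀ ≠ a' ∧ s₀ ≠ b' ∧ s₀ ≠ c' := by tauto
  rw [relE_eq_add_sub R hs₀ ha' hb' hc']
  refine Submodule.sub_mem _ (Submodule.add_mem _ ?_ ?_) ?_ <;> apply Submodule.subset_span
  · exact ⟨s₀, b', c', hs₀, hb', hc', hsb, hsc, hbc', Or.inl rfl, rfl⟩
  · exact ⟨b', a', s₀, hb', ha', hs₀, hab'.symm, hsb.symm, hsa.symm, Or.inr (Or.inr rfl), rfl⟩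
  · exact ⟨c', a', s₀, hc', ha', hs₀, hac'.symm, hsc.symm, hsa.symm, Or.inr (Or.inr rfl), rfl⟩

/-- The identity `E^S_{abc} = E^S_{s₀bc} + E^S_{bas₀} − E^S_{cas₀}` and the
consequence that all the elements `E^S_{abc}` lie in the R-linear span of those in which `s₀`
occurs among the indices. -/
theorem stmt7 (R : Type) [CommRing R] (S : Finset ℕ) (s₀ a b c : ℕ)
    (hs₀ : s₀ ∈ S) (ha : a ∈ S) (hb : b ∈ S) (hc : c ∈ S)
    (has : a ≠ s₀) (hbs : b ≠ s₀) (hcs : c ≠ s₀)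
    (hab : a ≠ b) (hac : a ≠ c) (hbc : b ≠ c) :
    relE R S a b c = relE R S s₀ b c + relE R S b a s₀ - relE R S c a s₀ ∧
    ∀ a' b' c' : ℕ, a' ∈ S → b' ∈ S → c' ∈ S → a' ≠ b' → a' ≠ c' → b' ≠ c' →
      relE R S a' b' c' ∈ Submodule.span R
        {x : RRing R S | ∃ a'' b'' c'' : ℕ, a'' ∈ S ∧ b'' ∈ S ∧ c'' ∈ S ∧
          a'' ≠ b'' ∧ a'' ≠ c'' ∧ b'' ≠ c'' ∧ (s₀ = a'' ∨ s₀ = b'' ∨ s₀ = c'') ∧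
          x = relE R S a'' b'' c''} :=
  stmt7_general R S s₀ a b c hs₀ ha hb hc

end
end

section
/- Let ℓ≥3 be an integer and a,b,c ∈ [ℓ] with a≠b and a≠c. In the polynomial ring R_{0,[ℓ]} over ℚ, the element G_{abc} = Σ_{(I,{J,K})∈P̃•([ℓ]): a∈J, b∉I, c∈I} ε_{J,K}·ℝD_{I;J,K} − Σ_{(I,{J,K})∈P̃•([ℓ]): a∈J, b∈I, c∉I} ε_{J,K}·ℝD_{I;J,K} lies in the ℚ-linear span of the elements E^{[ℓ]}_{a'b'c'} over all triples of distinct a',b',c' ∈ [ℓ]; in particular G_{abc} ∈ I_{0,[ℓ]}. -/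
open MvPolynomial Finset TensorProduct

noncomputable section

/- Every point of `S` lies in exactly one of the blocks `I`, `J`, `K` of a summand,
so `b ∉ I` means `b ∈ J ∨ b ∈ K`.  Comparing coefficients summand by summand, the six sums in
`E_{bac} - E_{cab}` then collapse to the two sums defining `G_{abc}`. -/

lemma mem_trichotomy {S I J : Finset ℕ} {x : ℕ} (hJ : J ⊆ S \ I) (hx : x ∈ S) :
    (x ∈ I ∧ x ∉ J ∧ x ∉ (S \ I) \ J) ∨ (x ∉ I ∧ x ∈ J ∧ x ∉ (S \ I) \ J) ∨
      (x ∉ I ∧ x ∉ J ∧ x ∈ (S \ I) \ J) := by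
  by_cases hxI : x ∈ I
  · exact Or.inl ⟨hxI, fun h => (mem_sdiff.1 (hJ h)).2 hxI,
      fun h => (mem_sdiff.1 (mem_sdiff.1 h).1).2 hxI⟩
  by_cases hxJ : x ∈ J
  · exact Or.inr (Or.inl ⟨hxI, hxJ, fun h => (mem_sdiff.1 h).2 hxJ⟩)
  · exact Or.inr (Or.inr ⟨hxI, hxJ, mem_sdiff.2 ⟨mem_sdiff.2 ⟨hx, hxI⟩, hxJ⟩⟩)

lemma relG_self (R : Type) [CommRing R] (S : Finset ℕ) (a b : ℕ) : relG R S a b b = 0 := by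
  simp only [relG, and_not_self_iff, not_and_self_iff, and_false, if_false, sum_const_zero,
    sub_self]

lemma relG_eq_relE_sub_relE (R : Type) [CommRing R] {S : Finset ℕ} {a b c : ℕ}
    (ha : a ∈ S) (hb : b ∈ S) (hc : c ∈ S) :
    relG R S a b c = relE R S b a c - relE R S c a b := by
  simp only [relG, relE, ← sum_sub_distrib]
  refine sum_congr rfl fun I _ => sum_congr rfl fun J hJ => ?_
  have hJ := mem_powerset.1 hJ
  rcases mem_trichotomy hJ ha with ⟨ha₁, ha₂, -⟩ | ⟨ha₁, ha₂, -⟩ | ⟨ha₁, ha₂, -⟩ <;>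
    rcases mem_trichotomy hJ hb with ⟨hb₁, hb₂, hb₃⟩ | ⟨hb₁, hb₂, hb₃⟩ | ⟨hb₁, hb₂, hb₃⟩ <;>
    rcases mem_trichotomy hJ hc with ⟨hc₁, hc₂, hc₃⟩ | ⟨hc₁, hc₂, hc₃⟩ | ⟨hc₁, hc₂, hc₃⟩ <;>
    simp [ha₁, ha₂, hb₁, hb₂, hb₃, hc₁, hc₂, hc₃]

lemma relE_mem_reIdeal (R : Type) [CommRing R] {S : Finset ℕ} {a b c : ℕ}
    (ha : a ∈ S) (hb : b ∈ S) (hc : c ∈ S) (hab : a ≠ b) (hac : a ≠ c) (hbc : b ≠ c) :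
    relE R S a b c ∈ reIdeal R S :=
  Ideal.subset_span (Set.mem_union_right _ ⟨a, b, c, ha, hb, hc, hab, hac, hbc, rfl⟩)

theorem stmt9_general (ℓ : ℕ) (a b c : ℕ)
    (ha : a ∈ Iset ℓ) (hb : b ∈ Iset ℓ) (hc : c ∈ Iset ℓ) (hab : a ≠ b) (hac : a ≠ c) :
    relG ℚ (Iset ℓ) a b c ∈ Submodule.span ℚ
      {x : RRing ℚ (Iset ℓ) | ∃ a' b' c' : ℕ, a' ∈ Iset ℓ ∧ b' ∈ Iset ℓ ∧ c' ∈ Iset ℓ ∧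
        a' ≠ b' ∧ a' ≠ c' ∧ b' ≠ c' ∧ x = relE ℚ (Iset ℓ) a' b' c'} ∧
    relG ℚ (Iset ℓ) a b c ∈ reIdeal ℚ (Iset ℓ) := by
  obtain rfl | hbc := eq_or_ne b c
  · rw [relG_self]
    exact ⟨zero_mem _, zero_mem _⟩
  rw [relG_eq_relE_sub_relE ℚ ha hb hc]
  exact ⟨sub_mem (Submodule.subset_span ⟨b, a, c, hb, ha, hc, hab.symm, hbc, hac, rfl⟩)
      (Submodule.subset_span ⟨c, a, b, hc, ha, hb, hac.symm, hbc.symm, hab, rfl⟩),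
    sub_mem (relE_mem_reIdeal ℚ hb ha hc hab.symm hbc hac)
      (relE_mem_reIdeal ℚ hc ha hb hac.symm hbc.symm hab)⟩

/-- The element `G_{abc}` lies in the ℚ-linear span of the elements
`E^{[ℓ]}_{a'b'c'}`; in particular `G_{abc} ∈ I_{0,[ℓ]}`. -/
theorem stmt9 (ℓ : ℕ) (hℓ : 3 ≤ ℓ) (a b c : ℕ)
    (ha : a ∈ Iset ℓ) (hb : b ∈ Iset ℓ) (hc : c ∈ Iset ℓ) (hab : a ≠ b) (hac : a ≠ c) :
    relG ℚ (Iset ℓ) a b c ∈ Submodule.span ℚ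
      {x : RRing ℚ (Iset ℓ) | ∃ a' b' c' : ℕ, a' ∈ Iset ℓ ∧ b' ∈ Iset ℓ ∧ c' ∈ Iset ℓ ∧
        a' ≠ b' ∧ a' ≠ c' ∧ b' ≠ c' ∧ x = relE ℚ (Iset ℓ) a' b' c'} ∧
    relG ℚ (Iset ℓ) a b c ∈ reIdeal ℚ (Iset ℓ) :=
  stmt9_general ℓ a b c ha hb hc hab hac

end
end

section
/- Let ℓ≥2 be an integer, R a commutative ring with unity, ∘ ∈ {0,−}, and {J,K} ∈ P([ℓ]) with min(J∪K)∈J. For every p ∈ R_{0,[ℓ]} there exists q ∈ R^{cx}_{{nd}⊔[ℓ]} such that ℝẼ^∘_{J,K}·(F(p) − F(F_{J,K}(q))) ∈ I_{0,[ℓ+1]}; that is, ℝẼ^∘_{J,K}·(Im F) ⊆ ℝẼ^∘_{J,K}·(Im(F∘F_{J,K})) + I_{0,[ℓ+1]}. -/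
open MvPolynomial Finset TensorProduct

noncomputable section

/-!
The set of `p` admitting a `q` is an `R`-subalgebra of `R_{0,[ℓ]}`, so it suffices to treat the
variables. A variable `ℝD_{I;J',K'}` with `{J',K'} ⪯ {J,K}` is, up to a sign, the image under
`F_{J,K}` of `D_{{nd}⊔I, J'⊔K'}`. For every other variable `x`, each term of `ℝẼ^∘_{J,K} · F(x)` is
a generator of `I_{0,[ℓ+1]}`, with one exception: for `∘ = 0` and `x = ℝE_{J,K}`, the two terms
of `F(x)` are the summands `T = J ∪ {ℓ+1}` and `T = J` of `Σ_T ℝE_{T,[ℓ+1]-T}`, and `ℝẼ⁰_{J,K}`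
times any other summand is a generator.
-/

theorem MvPolynomial.exists_mul_sub_mem_of_forall_X {R σ A B : Type*} [CommRing R]
    [CommRing A] [Algebra R A] [CommRing B] [Algebra R B]
    (f : MvPolynomial σ R →ₐ[R] B) (g : A →ₐ[R] B) (e : B) (I : Ideal B)
    (hX : ∀ n, ∃ q, e * (f (X n) - g q) ∈ I) (p : MvPolynomial σ R) :
    ∃ q, e * (f p - g q) ∈ I := by
  induction p using MvPolynomial.induction_on with
  | C r => exact ⟨algebraMap R A r, by simp⟩
  | add p p' hp hp' =>
    obtain ⟨q, hq⟩ := hp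
    obtain ⟨q', hq'⟩ := hp'
    refine ⟨q + q', ?_⟩
    convert I.add_mem hq hq' using 1
    simp only [map_add]; ring
  | mul_X p n hp =>
    obtain ⟨q, hq⟩ := hp
    obtain ⟨q', hq'⟩ := hX n
    refine ⟨q * q', ?_⟩
    convert I.add_mem (I.mul_mem_left (f (X n)) hq) (I.mul_mem_left (g q) hq') using 1
    simp only [map_mul]; ring

lemma Finset.eq_empty_of_disjoint_of_min_eq_s13 {α : Type*} [LinearOrder α] {s t : Finset α}
    (hst : Disjoint s t) (hmin : s.min = t.min) : s = ∅ := by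
  by_contra hs
  obtain ⟨a, ha⟩ := min_of_nonempty (nonempty_iff_ne_empty.mpr hs)
  exact disjoint_left.mp hst (mem_of_min ha) (mem_of_min (hmin ▸ ha))

lemma Finset.inter_union_eq_of_subset {α : Type*} [DecidableEq α] {s t u v : Finset α}
    (hs : s ⊆ u) (ht : t ⊆ v) (huv : Disjoint u v) : u ∩ (s ∪ t) = s := by
  rw [inter_union_distrib_left, inter_eq_right.mpr hs,
    disjoint_iff_inter_eq_empty.mp (huv.mono_right ht), union_empty]

lemma zero_notMem_Iset (ℓ : ℕ) : 0 ∉ Iset ℓ := by simp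

lemma Iset_succ (ℓ : ℕ) : Iset (ℓ + 1) = Iset ℓ ∪ {ℓ + 1} := by grind

lemma min_eq_one_of_subset_Iset {n : ℕ} {T : Finset ℕ} (hT : T ⊆ Iset n) (h1 : 1 ∈ T) :
    T.min = ((1 : ℕ) : WithTop ℕ) :=
  le_antisymm (min_le h1)
    (Finset.le_min fun _ hb => WithTop.coe_le_coe.mpr (mem_Icc.mp (hT hb)).1)

lemma min_eq_Iset_min_iff {m n : ℕ} {T : Finset ℕ} (hm : 1 ≤ m) (hT : T ⊆ Iset n) :
    T.min = (Iset m).min ↔ 1 ∈ T := by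
  rw [min_eq_one_of_subset_Iset subset_rfl (by simp [hm])]
  exact ⟨mem_of_min, min_eq_one_of_subset_Iset hT⟩

lemma epsm_mul_self (A B : Finset ℕ) : epsm A B * epsm A B = 1 := by
  unfold epsm; split_ifs <;> rfl

section

variable {R : Type} [CommRing R]

lemma reE_eq_zero {S A B : Finset ℕ} (h : ¬ validE S A B) : reE R S A B = 0 := if_neg h

lemma reD_eq_zero {S I A B : Finset ℕ} (h : ¬ validD S I A B) : reD R S I A B = 0 := by
  unfold reD
  split_ifs with hv <;> try rfl
  all_goals
    refine dif_neg fun hX => h ⟨hv.1, hv.2.1, hv.2.2, hX.2.2.1, ?_⟩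
    rw [← hv.2.2, union_sdiff_cancel_left hv.1] at hX
    exact hX.2.2.2.1

lemma reD_comm_s13 (S I A B : Finset ℕ) : reD R S I A B = reD R S I B A := by
  unfold reD
  by_cases hv : Disjoint I (A ∪ B) ∧ Disjoint A B ∧ I ∪ (A ∪ B) = S
  · have hv' : Disjoint I (B ∪ A) ∧ Disjoint B A ∧ I ∪ (B ∪ A) = S := by
      rw [union_comm B A]; exact ⟨hv.1, hv.2.1.symm, hv.2.2⟩
    rw [if_pos hv, if_pos hv']
    rcases lt_trichotomy A.min B.min with h | h | h
    · rw [if_pos h.le, if_neg (not_le.mpr h)]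
    · obtain rfl := eq_empty_of_disjoint_of_min_eq_s13 hv.2.1 h
      obtain rfl := eq_empty_of_disjoint_of_min_eq_s13 hv.2.1.symm h.symm
      rfl
    · rw [if_neg (not_le.mpr h), if_pos h.le]
  · have hv' : ¬ (Disjoint I (B ∪ A) ∧ Disjoint B A ∧ I ∪ (B ∪ A) = S) := by
      rw [union_comm B A, disjoint_comm (a := B)]; exact hv
    rw [if_neg hv, if_neg hv']

lemma reE_mul_reE_mem_reIdeal {S A B A' B' : Finset ℕ} :
    reE R S A B * reE R S A' B' ∈ reIdeal R S := by
  by_cases h : validE S A B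
  · by_cases h' : validE S A' B'
    · exact Ideal.subset_span (Or.inl (Or.inl (Or.inl (Or.inl ⟨A, B, A', B', h, h', rfl⟩))))
    · simp [reE_eq_zero h']
  · simp [reE_eq_zero h]

lemma reE_mul_reD_mem_reIdeal {S A B I C D : Finset ℕ} (hCD : ¬ preceq C D A B) :
    reE R S A B * reD R S I C D ∈ reIdeal R S := by
  by_cases h : validE S A B
  · by_cases h' : validD S I C D
    · exact Ideal.subset_span
        (Or.inl (Or.inl (Or.inl (Or.inr ⟨A, B, I, C, D, h, h', hCD, rfl⟩))))
    · simp [reD_eq_zero h']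
  · simp [reE_eq_zero h]

lemma reD_mul_reD_mem_reIdeal {S I C D I' C' D' : Finset ℕ} (h₁ : ¬ preceq C D C' D')
    (h₂ : ¬ preceq C' D' C D) (h₃ : ¬ C ∪ D ⊆ I') :
    reD R S I C D * reD R S I' C' D' ∈ reIdeal R S := by
  by_cases h : validD S I C D
  · by_cases h' : validD S I' C' D'
    · exact Ideal.subset_span
        (Or.inl (Or.inl (Or.inr ⟨I, C, D, I', C', D', h, h', h₁, h₂, h₃, rfl⟩)))
    · simp [reD_eq_zero h']
  · simp [reD_eq_zero h]

lemma relEsum_mem_reIdeal {S : Finset ℕ} : relEsum R S ∈ reIdeal R S :=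
  Ideal.subset_span (Or.inl (Or.inr rfl))

lemma reD_eq_X_inr {S : Finset ℕ} (d : DIdx S) :
    reD R S d.1.1 d.1.2 ((S \ d.1.1) \ d.1.2) = X (Sum.inr d) := by
  obtain ⟨⟨I, A⟩, hd⟩ := d
  obtain ⟨hI, hA, -, -, hmin⟩ := id hd
  dsimp only at *
  have hu : A ∪ (S \ I) \ A = S \ I := union_sdiff_of_subset hA
  have hle : A.min ≤ ((S \ I) \ A).min := by
    rw [← inf_eq_left, ← min_union, hu, hmin]
  have hv : Disjoint I (A ∪ (S \ I) \ A) ∧ Disjoint A ((S \ I) \ A) ∧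
      I ∪ (A ∪ (S \ I) \ A) = S := by
    rw [hu]; exact ⟨disjoint_sdiff, disjoint_sdiff, union_sdiff_of_subset hI⟩
  rw [reD, if_pos hv, if_pos hle, reXd, dif_pos hd]

lemma exists_FJKre_eq_reD {ℓ : ℕ} {J K I A : Finset ℕ} (hJK : Disjoint J K)
    (hIl : I ⊆ Iset ℓ) (hA : A ⊆ Iset ℓ \ I) (hI : 1 ≤ #I) (h2 : 2 ≤ #(Iset ℓ \ I))
    (hd : preceq A ((Iset ℓ \ I) \ A) J K) :
    ∃ q, FJKre R ℓ J K q = reD R (Iset ℓ) I A ((Iset ℓ \ I) \ A) := by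
  set T := Iset ℓ \ I
  have h0I : 0 ∉ I := fun h => zero_notMem_Iset ℓ (hIl h)
  have hT : insert 0 (Iset ℓ) \ insert 0 I = T := by
    rw [insert_sdiff_insert, sdiff_insert_of_notMem (zero_notMem_Iset ℓ)]
  have hi : insert 0 I ⊆ insert 0 (Iset ℓ) ∧ 2 ≤ #(insert 0 I) ∧
      2 ≤ #(insert 0 (Iset ℓ) \ insert 0 I) ∧ (insert 0 I).min = (insert 0 (Iset ℓ)).min := by
    refine ⟨insert_subset_insert 0 hIl, ?_, hT ▸ h2, by simp [min_insert]⟩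
    rw [card_insert_of_notMem h0I]; omega
  set ε : ℤ := (-1) ^ #K * epsm (J ∩ T) (K ∩ T)
  have hX : FJKre R ℓ J K (X ⟨insert 0 I, hi⟩) = ε • reD R (Iset ℓ) I (J ∩ T) (K ∩ T) := by
    simp [FJKre, hT, erase_insert h0I, ε]
  have hε : ε * ε = 1 := by
    rw [mul_mul_mul_comm, ← mul_pow, epsm_mul_self]; norm_num
  have hJKT : reD R (Iset ℓ) I (J ∩ T) (K ∩ T) = reD R (Iset ℓ) I A (T \ A) := by
    have hu : A ∪ T \ A = T := union_sdiff_of_subset hA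
    rcases hd with ⟨hAJ, hBK⟩ | ⟨hAK, hBJ⟩
    · have hJT := inter_union_eq_of_subset hAJ hBK hJK
      have hKT := inter_union_eq_of_subset hBK hAJ hJK.symm
      rw [hu] at hJT
      rw [union_comm, hu] at hKT
      rw [hJT, hKT]
    · have hJT := inter_union_eq_of_subset hBJ hAK hJK
      have hKT := inter_union_eq_of_subset hAK hBJ hJK.symm
      rw [union_comm, hu] at hJT
      rw [hu] at hKT
      rw [hJT, hKT, reD_comm_s13]
  refine ⟨ε • X ⟨insert 0 I, hi⟩, ?_⟩
  rw [map_zsmul, hX, smul_smul, hε, one_smul, hJKT]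

lemma Fre_X_inl (ℓ : ℕ) (e : EIdx (Iset ℓ)) :
    Fre R ℓ (X (Sum.inl e)) =
      reE R (Iset (ℓ + 1)) (e.1 ∪ {ℓ + 1}) (Iset (ℓ + 1) \ (e.1 ∪ {ℓ + 1}))
      + reE R (Iset (ℓ + 1)) e.1 (Iset (ℓ + 1) \ e.1) := by
  have he := e.2.1
  have hℓ : ℓ + 1 ∉ Iset ℓ := by simp
  have h₁ : Iset (ℓ + 1) \ (e.1 ∪ {ℓ + 1}) = Iset ℓ \ e.1 := by rw [Iset_succ]; grind
  have h₂ : Iset (ℓ + 1) \ e.1 = (Iset ℓ \ e.1) ∪ {ℓ + 1} := by rw [Iset_succ]; grind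
  rw [h₁, h₂, Fre, aeval_X]

lemma Fre_X_inr (ℓ : ℕ) (d : DIdx (Iset ℓ)) :
    Fre R ℓ (X (Sum.inr d)) =
      reD R (Iset (ℓ + 1)) (d.1.1 ∪ {ℓ + 1}) d.1.2 ((Iset ℓ \ d.1.1) \ d.1.2)
      + reD R (Iset (ℓ + 1)) d.1.1 (d.1.2 ∪ {ℓ + 1}) ((Iset ℓ \ d.1.1) \ d.1.2)
      + reD R (Iset (ℓ + 1)) d.1.1 d.1.2 (((Iset ℓ \ d.1.1) \ d.1.2) ∪ {ℓ + 1}) := by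
  rw [Fre, aeval_X]

lemma reEtm_mul_Fre_X_inl_mem (ℓ : ℕ) (J K : Finset ℕ) (e : EIdx (Iset ℓ)) :
    reEtm R ℓ J K * Fre R ℓ (X (Sum.inl e)) ∈ reIdeal R (Iset (ℓ + 1)) := by
  rw [Fre_X_inl, mul_add]
  exact add_mem reE_mul_reE_mem_reIdeal reE_mul_reE_mem_reIdeal

lemma reEt0_mul_reE_mem_reIdeal {ℓ : ℕ} {J K T : Finset ℕ} (hun : J ∪ K = Iset ℓ)
    (h1J : 1 ∈ J) (hT : T ⊆ Iset (ℓ + 1)) (h1T : 1 ∈ T) (hTJ : T ≠ J)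
    (hTJ' : T ≠ J ∪ {ℓ + 1}) :
    reEt0 R ℓ J K * reE R (Iset (ℓ + 1)) T (Iset (ℓ + 1) \ T) ∈ reIdeal R (Iset (ℓ + 1)) := by
  rw [reEt0, mul_comm]
  refine reE_mul_reD_mem_reIdeal ?_
  rintro (⟨hJT, hKT⟩ | ⟨hJT, -⟩)
  · rw [Iset_succ, ← hun] at hT hKT
    grind
  · exact (mem_sdiff.mp (hJT h1J)).2 h1T

lemma reEt0_mul_reE_add_reE_mem_reIdeal {ℓ : ℕ} {J K : Finset ℕ} (hun : J ∪ K = Iset ℓ)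
    (h1J : 1 ∈ J) :
    reEt0 R ℓ J K * (reE R (Iset (ℓ + 1)) (J ∪ {ℓ + 1}) (Iset (ℓ + 1) \ (J ∪ {ℓ + 1}))
      + reE R (Iset (ℓ + 1)) J (Iset (ℓ + 1) \ J)) ∈ reIdeal R (Iset (ℓ + 1)) := by
  have hJ : J ⊆ Iset ℓ := hun ▸ subset_union_left
  have hℓJ : ℓ + 1 ∉ J := fun h => by simpa using hJ h
  set P := (Iset (ℓ + 1)).powerset.filter fun T => T.min = (Iset (ℓ + 1)).min
  have hmemP : ∀ {T}, T ∈ P ↔ T ⊆ Iset (ℓ + 1) ∧ 1 ∈ T := by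
    intro T
    rw [mem_filter, mem_powerset]
    exact and_congr_right fun hT => min_eq_Iset_min_iff (by omega) hT
  have hJa : J ∪ {ℓ + 1} ∈ P := hmemP.mpr ⟨by rw [Iset_succ]; grind, by simp [h1J]⟩
  have hJP : J ∈ P.erase (J ∪ {ℓ + 1}) :=
    mem_erase.mpr ⟨fun h => hℓJ (h ▸ by simp), hmemP.mpr ⟨by rw [Iset_succ]; grind, h1J⟩⟩
  have hsplit : reE R (Iset (ℓ + 1)) (J ∪ {ℓ + 1}) (Iset (ℓ + 1) \ (J ∪ {ℓ + 1}))
      + reE R (Iset (ℓ + 1)) J (Iset (ℓ + 1) \ J) = relEsum R (Iset (ℓ + 1))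
      - ∑ T ∈ (P.erase (J ∪ {ℓ + 1})).erase J, reE R (Iset (ℓ + 1)) T (Iset (ℓ + 1) \ T) := by
    rw [relEsum, ← add_sum_erase _ _ hJa, ← add_sum_erase _ _ hJP]
    ring
  rw [hsplit, mul_sub, mul_sum]
  refine sub_mem (Ideal.mul_mem_left _ _ relEsum_mem_reIdeal) (sum_mem fun T hT => ?_)
  obtain ⟨hTJ, hT⟩ := mem_erase.mp hT
  obtain ⟨hTJa, hT⟩ := mem_erase.mp hT
  exact reEt0_mul_reE_mem_reIdeal hun h1J (hmemP.mp hT).1 (hmemP.mp hT).2 hTJ hTJa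

lemma reEt0_mul_Fre_X_inl_mem {ℓ : ℕ} {J K : Finset ℕ} (hℓ : 1 ≤ ℓ) (hun : J ∪ K = Iset ℓ)
    (hmin : J.min = (Iset ℓ).min) (e : EIdx (Iset ℓ)) :
    reEt0 R ℓ J K * Fre R ℓ (X (Sum.inl e)) ∈ reIdeal R (Iset (ℓ + 1)) := by
  have hJ : J ⊆ Iset ℓ := hun ▸ subset_union_left
  have h1J : 1 ∈ J := (min_eq_Iset_min_iff hℓ hJ).mp hmin
  have hℓJ : ℓ + 1 ∉ J := fun h => by simpa using hJ h
  have h1e : 1 ∈ e.1 := (min_eq_Iset_min_iff hℓ e.2.1).mp e.2.2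
  have hℓe : ℓ + 1 ∉ e.1 := fun h => by simpa using e.2.1 h
  rw [Fre_X_inl]
  by_cases he : e.1 = J
  · rw [he]
    exact reEt0_mul_reE_add_reE_mem_reIdeal hun h1J
  rw [mul_add]
  refine add_mem (reEt0_mul_reE_mem_reIdeal hun h1J ?_ (by simp [h1e]) ?_ ?_)
    (reEt0_mul_reE_mem_reIdeal hun h1J (by rw [Iset_succ]; grind) h1e he ?_)
  · rw [Iset_succ]; exact union_subset_union e.2.1 subset_rfl
  · exact fun h => hℓJ (h ▸ by simp)
  · exact fun h => he (by simpa [hℓe, hℓJ] using congrArg (·.erase (ℓ + 1)) h)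
  · exact fun h => hℓe (h ▸ by simp)

lemma reEtm_mul_reD_mem_reIdeal {ℓ : ℕ} {J K I A B A' B' : Finset ℕ} (hA : A ⊆ A')
    (hB : B ⊆ B') (hℓA : ℓ + 1 ∉ A) (hℓB : ℓ + 1 ∉ B) (hAB : ¬ preceq A B J K) :
    reEtm R ℓ J K * reD R (Iset (ℓ + 1)) I A' B' ∈ reIdeal R (Iset (ℓ + 1)) := by
  refine reE_mul_reD_mem_reIdeal fun h => hAB ?_
  grind

lemma reEtm_mul_Fre_X_inr_mem (ℓ : ℕ) {J K : Finset ℕ} (d : DIdx (Iset ℓ))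
    (hd : ¬ preceq d.1.2 ((Iset ℓ \ d.1.1) \ d.1.2) J K) :
    reEtm R ℓ J K * Fre R ℓ (X (Sum.inr d)) ∈ reIdeal R (Iset (ℓ + 1)) := by
  have hℓ : ∀ {T}, T ⊆ Iset ℓ → ℓ + 1 ∉ T := fun hT h => by simpa using hT h
  have hℓA : ℓ + 1 ∉ d.1.2 := hℓ (d.2.2.1.trans sdiff_subset)
  have hℓB : ℓ + 1 ∉ (Iset ℓ \ d.1.1) \ d.1.2 := hℓ (sdiff_subset.trans sdiff_subset)
  rw [Fre_X_inr, mul_add, mul_add]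
  refine add_mem (add_mem ?_ ?_) ?_ <;>
    exact reEtm_mul_reD_mem_reIdeal (by simp) (by simp) hℓA hℓB hd

lemma reEt0_mul_Fre_X_inr_mem {ℓ : ℕ} {J K : Finset ℕ} (hun : J ∪ K = Iset ℓ)
    (d : DIdx (Iset ℓ)) (hd : ¬ preceq d.1.2 ((Iset ℓ \ d.1.1) \ d.1.2) J K) :
    reEt0 R ℓ J K * Fre R ℓ (X (Sum.inr d)) ∈ reIdeal R (Iset (ℓ + 1)) := by

  obtain ⟨x, hx⟩ : d.1.1.Nonempty := card_pos.mp d.2.2.2.1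
  obtain ⟨y, hy⟩ : (Iset ℓ \ d.1.1).Nonempty := card_pos.mp (by have := d.2.2.2.2.1; omega)
  have hℓ : ℓ + 1 ∉ Iset ℓ := by simp
  rw [Fre_X_inr, mul_add, mul_add, reEt0]
  refine add_mem (add_mem (reD_mul_reD_mem_reIdeal ?_ ?_ ?_) (reD_mul_reD_mem_reIdeal ?_ ?_ ?_))
    (reD_mul_reD_mem_reIdeal ?_ ?_ ?_)
  all_goals grind

end

/-- `ℝẼ^∘_{J,K}·(Im F) ⊆ ℝẼ^∘_{J,K}·(Im (F ∘ F_{J,K})) + I_{0,[ℓ+1]}`. -/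
theorem stmt13 (R : Type) [CommRing R] (ℓ : ℕ) (hℓ : 2 ≤ ℓ) (J K : Finset ℕ)
    (hdisj : Disjoint J K) (hun : J ∪ K = Iset ℓ) (hmin : J.min = (J ∪ K).min)
    (E : RRing R (Iset (ℓ + 1))) (hE : E = reEt0 R ℓ J K ∨ E = reEtm R ℓ J K) :
    ∀ p : RRing R (Iset ℓ), ∃ q : CxRing R (insert 0 (Iset ℓ)),
      E * (Fre R ℓ p - Fre R ℓ (FJKre R ℓ J K q)) ∈ reIdeal R (Iset (ℓ + 1)) := by
  rw [hun] at hmin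
  refine exists_mul_sub_mem_of_forall_X _ ((Fre R ℓ).comp (FJKre R ℓ J K)) _ _ ?_
  rintro (e | d)
  · refine ⟨0, ?_⟩
    rw [map_zero, sub_zero]
    rcases hE with rfl | rfl
    exacts [reEt0_mul_Fre_X_inl_mem (by omega) hun hmin e, reEtm_mul_Fre_X_inl_mem ℓ J K e]
  by_cases hd : preceq d.1.2 ((Iset ℓ \ d.1.1) \ d.1.2) J K
  · obtain ⟨q, hq⟩ := exists_FJKre_eq_reD (R := R) hdisj d.2.1 d.2.2.1 d.2.2.2.1 d.2.2.2.2.1 hd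
    refine ⟨q, ?_⟩
    rw [AlgHom.comp_apply, hq, reD_eq_X_inr, sub_self, mul_zero]
    exact zero_mem _
  · refine ⟨0, ?_⟩
    rw [map_zero, sub_zero]
    rcases hE with rfl | rfl
    exacts [reEt0_mul_Fre_X_inr_mem hun d hd, reEtm_mul_Fre_X_inr_mem ℓ d hd]

end
end
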